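/- arXiv:2012.13039 — 2 statements merged into one kernel-verified Lean document; each statement's English description precedes it below -/
import Mathlib

section
/- Let K be a finite abstract simplicial complex on a vertex type V, and let u, v be distinct adjacent vertices of K (i.e., {u, v} ∈ K) such that V_K(u) \ {v} = V_K(v) \ {u} and, for every nonempty subset W ⊆ V_K(u) \ {v}, one has W ∪ {u} ∈ K if and only if W ∪ {v} ∈ K. Let π : V → V be the map with π(v) = u and π(z) = z for all z ≠ v. Then the image of K under the induced map on simplices, {π(σ) : σ ∈ K}, equals {σ ∈ K : v ∉ σ}, and this family is a subcomplex of K. In particular, the adjacent-vertex identification of u and v (taking the identified vertex to be c = u) maps K onto a subcomplex of K. -/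
/-- An abstract simplicial complex on a vertex type `V`: a finite set of nonempty
finite subsets of `V` closed under taking nonempty subsets. -/
def IsSimplicialComplex {V : Type*} (K : Finset (Finset V)) : Prop :=
  (∀ σ ∈ K, σ.Nonempty) ∧ (∀ σ ∈ K, ∀ τ : Finset V, τ ⊆ σ → τ.Nonempty → τ ∈ K)

/-- `Nbrs K u` is the set `V_K(u)` of vertices adjacent to `u` in `K`
(vertices `z ≠ u` spanning a common simplex with `u`, equivalently `{u, z} ∈ K`);
note `u ∉ Nbrs K u`. -/
def Nbrs {V : Type*} [DecidableEq V] (K : Finset (Finset V)) (u : V) : Set V :=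
  {z | z ≠ u ∧ ({u, z} : Finset V) ∈ K}

/-!
The map `π` fixes every simplex avoiding `v` and sends a simplex `σ ∋ v` to
`insert u (σ.erase v)`, so it suffices to show that the latter lies in `K`:
it is a face of `σ` if `u ∈ σ`, a face of `{u, v}` if `σ = {v}`, and otherwise
`W = σ.erase v` is a nonempty set of neighbours of `v` other than `u`, hence (by the link
condition) of neighbours of `u` other than `v`, so the matching condition turns
`insert v W = σ ∈ K` into `insert u W ∈ K`.
-/

section

variable {V : Type*} [DecidableEq V] {K : Finset (Finset V)}

theorem IsSimplicialComplex.filter_notMem (hK : IsSimplicialComplex K) (v : V) :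
    IsSimplicialComplex (K.filter (fun σ => v ∉ σ)) := by
  refine ⟨fun σ hσ => hK.1 σ (Finset.mem_filter.mp hσ).1, fun σ hσ τ hτσ hτ => ?_⟩
  rw [Finset.mem_filter] at hσ ⊢
  exact ⟨hK.2 σ hσ.1 τ hτσ hτ, fun hv => hσ.2 (hτσ hv)⟩

variable {u v : V} {σ : Finset V}

theorem Finset.image_ite_eq_of_notMem (hv : v ∉ σ) :
    σ.image (fun z => if z = v then u else z) = σ := by
  refine (Finset.image_congr fun z hz => ?_).trans Finset.image_id
  simp only [id, if_neg (ne_of_mem_of_not_mem hz hv)]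

theorem Finset.image_ite_eq_of_mem (hv : v ∈ σ) :
    σ.image (fun z => if z = v then u else z) = insert u (σ.erase v) := by
  rw [← Finset.insert_erase hv, Finset.image_insert, if_pos rfl,
    Finset.image_ite_eq_of_notMem (Finset.notMem_erase v σ), Finset.erase_insert_eq_erase,
    Finset.erase_idem]

theorem mem_nbrs_of_mem_simplex (hK : IsSimplicialComplex K) (hσ : σ ∈ K) (hv : v ∈ σ)
    {z : V} (hz : z ∈ σ) (hzv : z ≠ v) : z ∈ Nbrs K v :=
  ⟨hzv, hK.2 σ hσ _ (Finset.insert_subset hv (Finset.singleton_subset_iff.mpr hz))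
    (Finset.insert_nonempty _ _)⟩

theorem insert_erase_mem_of_link (hK : IsSimplicialComplex K)
    (hadj : ({u, v} : Finset V) ∈ K) (hlink : Nbrs K u \ {v} = Nbrs K v \ {u})
    (hmatch : ∀ W : Finset V, W.Nonempty → ↑W ⊆ Nbrs K u \ {v} →
      (insert u W ∈ K ↔ insert v W ∈ K))
    (hσ : σ ∈ K) (hv : v ∈ σ) : insert u (σ.erase v) ∈ K := by
  by_cases hu : u ∈ σ
  · exact hK.2 σ hσ _ (Finset.insert_subset hu (Finset.erase_subset v σ))
      (Finset.insert_nonempty _ _)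
  obtain hW | hW := (σ.erase v).eq_empty_or_nonempty
  · rw [hW]
    exact hK.2 _ hadj _ (by simp) (Finset.insert_nonempty _ _)
  have hWlink : ↑(σ.erase v) ⊆ Nbrs K u \ {v} := by
    rw [hlink]
    intro z hz
    obtain ⟨hzv, hzσ⟩ := Finset.mem_erase.mp hz
    exact ⟨mem_nbrs_of_mem_simplex hK hσ hv hzσ hzv, fun hzu => hu (hzu ▸ hzσ)⟩
  refine (hmatch _ hW hWlink).mpr ?_
  rwa [Finset.insert_erase hv]

theorem image_ite_eq_filter_notMem (hK : IsSimplicialComplex K) (huv : u ≠ v)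
    (hadj : ({u, v} : Finset V) ∈ K) (hlink : Nbrs K u \ {v} = Nbrs K v \ {u})
    (hmatch : ∀ W : Finset V, W.Nonempty → ↑W ⊆ Nbrs K u \ {v} →
      (insert u W ∈ K ↔ insert v W ∈ K)) :
    K.image (fun σ => σ.image (fun z => if z = v then u else z)) =
      K.filter (fun σ => v ∉ σ) := by
  ext τ
  simp only [Finset.mem_image, Finset.mem_filter]
  constructor
  · rintro ⟨σ, hσ, rfl⟩
    by_cases hv : v ∈ σ
    · rw [Finset.image_ite_eq_of_mem hv]
      refine ⟨insert_erase_mem_of_link hK hadj hlink hmatch hσ hv, ?_⟩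
      simp [huv.symm]
    · rw [Finset.image_ite_eq_of_notMem hv]
      exact ⟨hσ, hv⟩
  · rintro ⟨hτ, hv⟩
    exact ⟨τ, hτ, Finset.image_ite_eq_of_notMem hv⟩

end

/-- Adjacent-vertex identification maps a complex onto a subcomplex of itself:
if `u, v` are distinct adjacent vertices of `K` with `V_K(u) \ {v} = V_K(v) \ {u}`
and, for each nonempty `W ⊆ V_K(u) \ {v}`, `W ∪ {u} ∈ K ↔ W ∪ {v} ∈ K`, and
`π : V → V` sends `v` to `u` and fixes every other vertex, then
`{π(σ) : σ ∈ K} = {σ ∈ K : v ∉ σ}`, and this family is a subcomplex of `K`. -/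
theorem adjacent_vertex_identification {V : Type*} [DecidableEq V]
    (K : Finset (Finset V)) (hK : IsSimplicialComplex K)
    (u v : V) (huv : u ≠ v) (hadj : ({u, v} : Finset V) ∈ K)
    (hlink : Nbrs K u \ {v} = Nbrs K v \ {u})
    (hmatch : ∀ W : Finset V, W.Nonempty → ↑W ⊆ Nbrs K u \ {v} →
      (insert u W ∈ K ↔ insert v W ∈ K)) :
    K.image (fun σ => σ.image (fun z => if z = v then u else z)) =
      K.filter (fun σ => v ∉ σ) ∧
    IsSimplicialComplex (K.filter (fun σ => v ∉ σ)) ∧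
    K.filter (fun σ => v ∉ σ) ⊆ K :=
  ⟨image_ite_eq_filter_notMem hK huv hadj hlink hmatch, hK.filter_notMem v,
    Finset.filter_subset _ _⟩
end

section
/- Let K be a finite abstract simplicial complex on a vertex type V, and let u, v be distinct nonadjacent vertices of K (i.e., {u} ∈ K and {v} ∈ K but {u, v} ∉ K) such that V_K(u) = V_K(v) and, for every nonempty subset W ⊆ V_K(u), one has W ∪ {u} ∈ K if and only if W ∪ {v} ∈ K. Let π : V → V be the map with π(v) = u and π(z) = z for all z ≠ v. Then the image of K under the induced map on simplices, {π(σ) : σ ∈ K}, equals {σ ∈ K : v ∉ σ}, and this family is a subcomplex of K. In particular, the nonadjacent-vertex identification of u and v (taking the identified vertex to be c = u) maps K onto a subcomplex of K, and is therefore mutually inverse with the inclusion of this subcomplex into K. -/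
/-!
A simplex avoiding `v` is fixed by the identification. A simplex `σ ∋ v` is sent to
`insert u (σ.erase v)`; its other vertices all lie in `V_K(v) = V_K(u)`, so the matching
hypothesis (or `{u} ∈ K` when `σ = {v}`) puts the image back in `K`. Conversely every simplex
avoiding `v` is its own image, and deleting a vertex from a complex always leaves a subcomplex.
-/

def collapse {V : Type*} [DecidableEq V] (u v : V) (z : V) : V :=
  if z = v then u else z

section Collapse

variable {V : Type*} [DecidableEq V] {u v : V}

@[simp]
theorem collapse_self : collapse u v v = u := if_pos rfl

theorem collapse_of_ne {z : V} (h : z ≠ v) : collapse u v z = z := if_neg h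

theorem collapse_ne (huv : u ≠ v) (z : V) : collapse u v z ≠ v := by
  by_cases h : z = v
  · rwa [h, collapse_self]
  · rwa [collapse_of_ne h]

theorem Finset.notMem_image_collapse (huv : u ≠ v) (σ : Finset V) :
    v ∉ σ.image (collapse u v) := by
  simpa only [Finset.mem_image, not_exists, not_and] using fun z _ => collapse_ne huv z

theorem Finset.image_collapse_of_notMem {σ : Finset V} (h : v ∉ σ) :
    σ.image (collapse u v) = σ := by
  conv_rhs => rw [← Finset.image_id (s := σ)]
  exact Finset.image_congr fun z hz => collapse_of_ne (ne_of_mem_of_not_mem hz h)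

theorem Finset.image_collapse_of_mem {σ : Finset V} (h : v ∈ σ) :
    σ.image (collapse u v) = insert u (σ.erase v) := by
  conv_lhs => rw [← Finset.insert_erase h]
  rw [Finset.image_insert, collapse_self, image_collapse_of_notMem (Finset.notMem_erase v σ)]

end Collapse

namespace IsSimplicialComplex

variable {V : Type*} [DecidableEq V] {K : Finset (Finset V)}

theorem filter_notMem_s11 (hK : IsSimplicialComplex K) (v : V) :
    IsSimplicialComplex (K.filter (fun σ => v ∉ σ)) := by
  refine ⟨fun σ hσ => hK.1 σ (Finset.mem_filter.mp hσ).1, fun σ hσ τ hτσ hτ => ?_⟩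
  rw [Finset.mem_filter] at hσ ⊢
  exact ⟨hK.2 σ hσ.1 τ hτσ hτ, fun hv => hσ.2 (hτσ hv)⟩

theorem coe_erase_subset_nbrs (hK : IsSimplicialComplex K) {σ : Finset V} (hσ : σ ∈ K)
    {v : V} (hv : v ∈ σ) : ↑(σ.erase v) ⊆ Nbrs K v := by
  intro w hw
  rw [Finset.mem_coe, Finset.mem_erase] at hw
  refine ⟨hw.1, hK.2 σ hσ _ ?_ (Finset.insert_nonempty v {w})⟩
  exact Finset.insert_subset hv (Finset.singleton_subset_iff.mpr hw.2)

variable {u v : V}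

theorem insert_erase_mem (hK : IsSimplicialComplex K) (hu : {u} ∈ K)
    (hlink : Nbrs K v ⊆ Nbrs K u)
    (hmatch : ∀ W : Finset V, W.Nonempty → ↑W ⊆ Nbrs K u → insert v W ∈ K → insert u W ∈ K)
    {σ : Finset V} (hσ : σ ∈ K) (hv : v ∈ σ) : insert u (σ.erase v) ∈ K := by
  rcases (σ.erase v).eq_empty_or_nonempty with hW | hW
  · simpa [hW] using hu
  · refine hmatch _ hW ((hK.coe_erase_subset_nbrs hσ hv).trans hlink) ?_
    rwa [Finset.insert_erase hv]

theorem image_image_collapse (hK : IsSimplicialComplex K) (huv : u ≠ v) (hu : {u} ∈ K)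
    (hlink : Nbrs K v ⊆ Nbrs K u)
    (hmatch : ∀ W : Finset V, W.Nonempty → ↑W ⊆ Nbrs K u → insert v W ∈ K → insert u W ∈ K) :
    K.image (fun σ => σ.image (collapse u v)) = K.filter (fun σ => v ∉ σ) := by
  ext τ
  simp only [Finset.mem_image, Finset.mem_filter]
  constructor
  · rintro ⟨σ, hσ, rfl⟩
    refine ⟨?_, σ.notMem_image_collapse huv⟩
    by_cases hv : v ∈ σ
    · rw [Finset.image_collapse_of_mem hv]
      exact hK.insert_erase_mem hu hlink hmatch hσ hv
    · rwa [Finset.image_collapse_of_notMem hv]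
  · rintro ⟨hτ, hv⟩
    exact ⟨τ, hτ, Finset.image_collapse_of_notMem hv⟩

end IsSimplicialComplex

theorem nonadjacent_vertex_identification_general {V : Type*} [DecidableEq V]
    (K : Finset (Finset V)) (hK : IsSimplicialComplex K)
    (u v : V) (huv : u ≠ v)
    (hu : ({u} : Finset V) ∈ K)
    (hlink : Nbrs K u = Nbrs K v)
    (hmatch : ∀ W : Finset V, W.Nonempty → ↑W ⊆ Nbrs K u →
      (insert u W ∈ K ↔ insert v W ∈ K)) :
    K.image (fun σ => σ.image (fun z => if z = v then u else z)) =
      K.filter (fun σ => v ∉ σ) ∧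
    IsSimplicialComplex (K.filter (fun σ => v ∉ σ)) ∧
    K.filter (fun σ => v ∉ σ) ⊆ K :=
  ⟨hK.image_image_collapse huv hu hlink.ge fun W hW hWu => (hmatch W hW hWu).2,
    hK.filter_notMem_s11 v, Finset.filter_subset _ K⟩

/-- Nonadjacent-vertex identification maps a complex onto a subcomplex of itself
(and hence is mutually inverse with the inclusion of this subcomplex): if `u, v` are
distinct nonadjacent vertices of `K` with `V_K(u) = V_K(v)` and, for each nonempty
`W ⊆ V_K(u)`, `W ∪ {u} ∈ K ↔ W ∪ {v} ∈ K`, and `π : V → V` sends `v` to `u` and fixes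
every other vertex, then `{π(σ) : σ ∈ K} = {σ ∈ K : v ∉ σ}`, a subcomplex of `K`. -/
theorem nonadjacent_vertex_identification {V : Type*} [DecidableEq V]
    (K : Finset (Finset V)) (hK : IsSimplicialComplex K)
    (u v : V) (huv : u ≠ v)
    (hu : ({u} : Finset V) ∈ K) (hv : ({v} : Finset V) ∈ K)
    (hnadj : ({u, v} : Finset V) ∉ K)
    (hlink : Nbrs K u = Nbrs K v)
    (hmatch : ∀ W : Finset V, W.Nonempty → ↑W ⊆ Nbrs K u →
      (insert u W ∈ K ↔ insert v W ∈ K)) :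
    K.image (fun σ => σ.image (fun z => if z = v then u else z)) =
      K.filter (fun σ => v ∉ σ) ∧
    IsSimplicialComplex (K.filter (fun σ => v ∉ σ)) ∧
    K.filter (fun σ => v ∉ σ) ⊆ K :=
  nonadjacent_vertex_identification_general K hK u v huv hu hlink hmatch
end
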